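/- Let X be a finite set and let 𝒮 be a nonempty finite collection of subsets of X. Then there exists a partition of X into two disjoint subsets X' and X'' such that for every S ∈ 𝒮, both |S ∩ X'| ≤ |S|/2 + √(2·|S|·ln(2·|𝒮|)) and |S ∩ X''| ≤ |S|/2 + √(2·|S|·ln(2·|𝒮|)). -/

import Mathlib

/-!
Colour each point of `X` red or blue uniformly at random, i.e. count subsets `c ⊆ X`. For a fixed
`S` of size `n`, the exponential moment `∑_c exp (l |S ∩ c|) = 2^{|X \ S|} (e^l + 1)^n` together
with `cosh x ≤ exp (x² / 2)` gives the Chernoff bound: at most a fraction `exp (-2 t² / n)` of the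
colourings have `|S ∩ c| > n / 2 + t`, and by the symmetry `c ↦ X \ c` the same holds for the blue
side. For `t² = 2 n ln (2m)`, with `m = |𝒮|`, both tails together have fraction at most
`2 / (2m)⁴`, so a union bound over the `m` sets leaves a colouring that is balanced on every set.
-/

open Finset Real

lemma card_filter_lt_le_sum_exp {ι : Type*} (s : Finset ι) (g : ι → ℝ) (b : ℝ) {l : ℝ}
    (hl : 0 ≤ l) : (#{x ∈ s | b < g x} : ℝ) ≤ ∑ x ∈ s, exp (l * (g x - b)) := by
  rw [card_filter]
  push_cast
  gcongr with x
  split_ifs with h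
  · exact one_le_exp (mul_nonneg hl (sub_pos.2 h).le)
  · exact (exp_pos _).le

lemma exp_add_one_le_two_mul_exp (l : ℝ) : exp l + 1 ≤ 2 * exp (l / 2 + l ^ 2 / 8) := by
  have hcosh : exp l + 1 = 2 * exp (l / 2) * cosh (l / 2) := by
    have hsq : exp l = exp (l / 2) * exp (l / 2) := by rw [← exp_add, add_halves]
    have hinv : exp (l / 2) * exp (-(l / 2)) = 1 := by rw [← exp_add, add_neg_cancel, exp_zero]
    rw [cosh_eq]
    linear_combination hsq - hinv
  calc exp l + 1 = 2 * exp (l / 2) * cosh (l / 2) := hcosh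
    _ ≤ 2 * exp (l / 2) * exp ((l / 2) ^ 2 / 2) := by gcongr; exact cosh_le_exp_half_sq _
    _ = 2 * exp (l / 2 + l ^ 2 / 8) := by rw [mul_assoc, ← exp_add]; ring_nf

section

variable {α : Type*} [DecidableEq α]

lemma sum_powerset_pow_card_inter {S X : Finset α} (hS : S ⊆ X) (x : ℝ) :
    ∑ c ∈ X.powerset, x ^ #(S ∩ c) = (x + 1) ^ #S * 2 ^ #(X \ S) := by
  have h := prod_add (fun i => if i ∈ S then x else 1) (fun _ => (1 : ℝ)) X
  simp only [prod_ite_mem, prod_const_one, mul_one, prod_const, ite_add, prod_ite,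
    filter_mem_eq_inter, inter_eq_right.2 hS, filter_notMem_eq_sdiff] at h
  simp_rw [inter_comm S]
  rw [← h]
  norm_num

lemma card_powerset_filter_lt_card_inter_le {S X : Finset α} (hS : S ⊆ X) {t : ℝ} (ht : 0 ≤ t) :
    (#{c ∈ X.powerset | (#S : ℝ) / 2 + t < #(S ∩ c)} : ℝ) ≤ 2 ^ #X * exp (-2 * t ^ 2 / #S) := by
  set n : ℝ := (#S : ℝ) with hn
  -- `l` minimises the final exponent `n * l ^ 2 / 8 - l * t`
  set l := 4 * t / n
  calc (#{c ∈ X.powerset | n / 2 + t < #(S ∩ c)} : ℝ)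
      ≤ ∑ c ∈ X.powerset, exp (l * (#(S ∩ c) - (n / 2 + t))) :=
        card_filter_lt_le_sum_exp _ _ _ (by positivity)
    _ = exp (-(l * (n / 2 + t))) * ((exp l + 1) ^ #S * 2 ^ #(X \ S)) := by
        rw [← sum_powerset_pow_card_inter hS, mul_sum]
        refine sum_congr rfl fun c _ => ?_
        rw [← exp_nat_mul, ← exp_add]
        ring_nf
    _ ≤ exp (-(l * (n / 2 + t))) * ((2 * exp (l / 2 + l ^ 2 / 8)) ^ #S * 2 ^ #(X \ S)) := by
        gcongr
        exact exp_add_one_le_two_mul_exp l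
    _ = 2 ^ #X * exp (n * l ^ 2 / 8 - l * t) := by
        have hexp : exp (n * l ^ 2 / 8 - l * t) =
            exp (-(l * (n / 2 + t))) * exp (#S * (l / 2 + l ^ 2 / 8)) := by
          rw [← exp_add, hn]; ring_nf
        rw [mul_pow, ← exp_nat_mul, ← card_sdiff_add_card_eq_card hS, pow_add, hexp]
        ring
    _ = 2 ^ #X * exp (-2 * t ^ 2 / n) := by
        rcases eq_or_ne n 0 with h0 | h0
        · simp [l, h0]
        · congr 2
          simp only [l]
          field_simp
          ring

lemma card_powerset_filter_sdiff (X : Finset α) (p : Finset α → Prop) [DecidablePred p] :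
    #{c ∈ X.powerset | p (X \ c)} = #{c ∈ X.powerset | p c} := by
  refine card_nbij' (X \ ·) (X \ ·) ?_ ?_ ?_ ?_ <;> intro c hc <;>
    simp only [coe_filter, Set.mem_ofPred_eq, mem_powerset] at hc ⊢
  · exact ⟨sdiff_subset, hc.2⟩
  · exact ⟨sdiff_subset, by rw [Finset.sdiff_sdiff_eq_self hc.1]; exact hc.2⟩
  · exact Finset.sdiff_sdiff_eq_self hc.1
  · exact Finset.sdiff_sdiff_eq_self hc.1

noncomputable def unbalancedSubsets (X S : Finset α) (L : ℝ) : Finset (Finset α) :=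
  {c ∈ X.powerset | (#S : ℝ) / 2 + √(2 * #S * L) < #(S ∩ c) ∨
    (#S : ℝ) / 2 + √(2 * #S * L) < #(S ∩ (X \ c))}

lemma card_unbalancedSubsets_le {S X : Finset α} (hS : S ⊆ X) {L : ℝ} (hL : 0 ≤ L) :
    (#(unbalancedSubsets X S L) : ℝ) ≤ 2 * 2 ^ #X * exp (-(4 * L)) := by
  set t := √(2 * #S * L) with ht
  rcases S.eq_empty_or_nonempty with rfl | hne
  · simp [unbalancedSubsets, exp_nonneg]
  have hcomp : #{c ∈ X.powerset | (#S : ℝ) / 2 + t < #(S ∩ (X \ c))} =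
      #{c ∈ X.powerset | (#S : ℝ) / 2 + t < #(S ∩ c)} :=
    card_powerset_filter_sdiff X fun c => (#S : ℝ) / 2 + t < #(S ∩ c)
  have hexp : exp (-2 * t ^ 2 / #S) = exp (-(4 * L)) := by
    have : (#S : ℝ) ≠ 0 := by positivity
    rw [ht, sq_sqrt (by positivity)]
    field_simp
    ring_nf
  rw [unbalancedSubsets, filter_or]
  calc (#({c ∈ X.powerset | (#S : ℝ) / 2 + t < #(S ∩ c)} ∪
          {c ∈ X.powerset | (#S : ℝ) / 2 + t < #(S ∩ (X \ c))}) : ℝ)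
      ≤ #{c ∈ X.powerset | (#S : ℝ) / 2 + t < #(S ∩ c)} +
          #{c ∈ X.powerset | (#S : ℝ) / 2 + t < #(S ∩ (X \ c))} := by
        exact_mod_cast card_union_le _ _
    _ ≤ 2 * 2 ^ #X * exp (-(4 * L)) := by
        rw [hcomp, ← hexp]
        linarith [card_powerset_filter_lt_card_inter_le hS (sqrt_nonneg (2 * #S * L))]

lemma exists_subset_forall_card_inter_le (X : Finset α) (𝒮 : Finset (Finset α))
    (hsub : ∀ S ∈ 𝒮, S ⊆ X) {L : ℝ} (hL : 0 ≤ L) (hsmall : 2 * #𝒮 * exp (-(4 * L)) < 1) :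
    ∃ c ⊆ X, ∀ S ∈ 𝒮, (#(S ∩ c) : ℝ) ≤ #S / 2 + √(2 * #S * L) ∧
      (#(S ∩ (X \ c)) : ℝ) ≤ #S / 2 + √(2 * #S * L) := by
  have hbad : (#(𝒮.biUnion (unbalancedSubsets X · L)) : ℝ) < #X.powerset := by
    calc (#(𝒮.biUnion (unbalancedSubsets X · L)) : ℝ)
        ≤ ∑ S ∈ 𝒮, (#(unbalancedSubsets X S L) : ℝ) := by
          rw [← Nat.cast_sum]; exact Nat.cast_le.2 card_biUnion_le
      _ ≤ ∑ S ∈ 𝒮, 2 * 2 ^ #X * exp (-(4 * L)) :=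
          sum_le_sum fun S hS => card_unbalancedSubsets_le (hsub S hS) hL
      _ = 2 ^ #X * (2 * #𝒮 * exp (-(4 * L))) := by rw [sum_const, nsmul_eq_mul]; ring
      _ < #X.powerset := by
          rw [card_powerset, Nat.cast_pow, Nat.cast_two]
          exact mul_lt_of_lt_one_right (by positivity) hsmall
  obtain ⟨c, hcX, hcbad⟩ := exists_mem_notMem_of_card_lt_card (by exact_mod_cast hbad)
  refine ⟨c, mem_powerset.1 hcX, fun S hS => ?_⟩
  simp only [unbalancedSubsets, mem_biUnion, mem_filter, not_exists, not_and, not_or,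
    not_lt] at hcbad
  exact hcbad S hS hcX

end

theorem stmt_2 {α : Type*} [DecidableEq α] (X : Finset α) (𝒮 : Finset (Finset α))
    (hne : 𝒮.Nonempty) (hsub : ∀ S ∈ 𝒮, S ⊆ X) :
    ∃ X' X'' : Finset α, X' ∪ X'' = X ∧ Disjoint X' X'' ∧
      ∀ S ∈ 𝒮,
        ((S ∩ X').card : ℝ) ≤ (S.card : ℝ) / 2 +
            Real.sqrt (2 * (S.card : ℝ) * Real.log (2 * (𝒮.card : ℝ))) ∧
        ((S ∩ X'').card : ℝ) ≤ (S.card : ℝ) / 2 +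
            Real.sqrt (2 * (S.card : ℝ) * Real.log (2 * (𝒮.card : ℝ))) := by
  have h2m : (2 : ℝ) ≤ 2 * #𝒮 := by
    have : (1 : ℝ) ≤ #𝒮 := by exact_mod_cast hne.card_pos
    linarith
  have hsmall : 2 * #𝒮 * exp (-(4 * log (2 * #𝒮))) < 1 := by
    rw [show 4 * log (2 * #𝒮 : ℝ) = log ((2 * #𝒮) ^ 4) by rw [log_pow]; norm_num,
      exp_neg, exp_log (by positivity), ← div_eq_mul_inv, div_lt_one (by positivity)]
    exact lt_self_pow₀ (by linarith) (by norm_num)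
  obtain ⟨c, hcX, hc⟩ := exists_subset_forall_card_inter_le X 𝒮 hsub
    (log_nonneg (by linarith)) hsmall
  exact ⟨c, X \ c, union_sdiff_of_subset hcX, disjoint_sdiff, hc⟩
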